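/- arXiv:2009.03675 — 8 statements merged into one kernel-verified Lean document; each statement's English description precedes it below -/
import Mathlib

section
/- In a Wheeler graph, for any label a ∈ Σ, the set of nodes that have an incoming edge labeled a forms an interval (a set of consecutive elements) in the Wheeler ordering, and these intervals for distinct labels appear in increasing order of the labels. -/
theorem stmt_1_general {V A : Type} [LinearOrder V] [LinearOrder A]
    (E : V → V → A → Prop)
    (hA : ∀ u v a u' v' a', E u v a → E u' v' a' → a < a' → v < v') :
    (∀ (a : A) (v v' x : V), (∃ u, E u v a) → (∃ u, E u v' a) →
        v ≤ x → x ≤ v' → (∃ u b, E u x b) → ∃ u, E u x a) ∧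
    (∀ (a a' : A) (v v' : V), a < a' →
        (∃ u, E u v a) → (∃ u, E u v' a') → v < v') := by
  refine ⟨?_, fun a a' v v' h ⟨u, hu⟩ ⟨u', hu'⟩ => hA u v a u' v' a' hu hu' h⟩
  rintro a v v' x ⟨u, hv⟩ ⟨u', hv'⟩ hvx hxv' ⟨w, b, hx⟩
  obtain rfl : b = a := le_antisymm
    (not_lt.1 fun hab => (hA u' v' a w x b hv' hx hab).not_ge hxv')
    (not_lt.1 fun hba => (hA w x b u v a hx hv hba).not_ge hvx)
  exact ⟨w, hx⟩

/-- In a Wheeler graph, for every label `a` the set of nodes having an incoming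
edge labeled `a` is an interval of the node ordering (among nodes with positive
in-degree), and for `a < a'` every node with incoming label `a` precedes every
node with incoming label `a'`. -/
theorem stmt_1 {V A : Type} [LinearOrder V] [LinearOrder A]
    (E : V → V → A → Prop)
    (hfirst : ∀ v w : V, (∀ u a, ¬ E u v a) → (∃ u a, E u w a) → v < w)
    (hA : ∀ u v a u' v' a', E u v a → E u' v' a' → a < a' → v < v')
    (hB : ∀ u v a u' v' a', E u v a → E u' v' a' → a = a' → u < u' → v ≤ v') :
    (∀ (a : A) (v v' x : V), (∃ u, E u v a) → (∃ u, E u v' a) →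
        v ≤ x → x ≤ v' → (∃ u b, E u x b) → ∃ u, E u x a) ∧
    (∀ (a a' : A) (v v' : V), a < a' →
        (∃ u, E u v a) → (∃ u, E u v' a') → v < v') :=
  stmt_1_general E hA
end

section
/- An order-k de Bruijn graph, with its nodes ordered by the colexicographic order of their associated k-mers (i.e., lexicographic order of the reversed k-mers, with the node $^k consisting of k sentinel symbols first), is a Wheeler graph. -/
/-!
Reading k-mers backwards, an edge `(u, v)` labelled `c` gives `v.reverse = c :: t`, where `t` is
`u.reverse` with its last symbol removed. Hence the label is the most significant symbol of the
colexicographic key of the target, which gives the first Wheeler condition; and for equal labels,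
comparing the targets amounts to comparing the sources without their last reversed symbol, which
can only turn a strict inequality into an equality. Finally the only source, `$^k`, is the
colexicographically least k-mer because `$` is the least symbol.
-/

namespace List

variable {α : Type*}

theorem lex_replicate_of_isBot [PartialOrder α] {d : α} (hd : IsBot d) :
    ∀ {l : List α}, l ≠ replicate l.length d → Lex (· < ·) (replicate l.length d) l
  | [], hne => absurd rfl hne
  | a :: t, hne => by
    rw [length_cons, replicate_succ]
    by_cases ha : a = d
    · subst ha
      refine Lex.cons (lex_replicate_of_isBot hd fun ht => hne ?_)
      rw [length_cons, replicate_succ, ← ht]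
    · exact Lex.rel (lt_of_le_of_ne (hd a) (Ne.symm ha))

theorem Lex.left_or_eq_of_append {r : α → α → Prop} :
    ∀ {a b s t : List α}, a.length = b.length → Lex r (a ++ s) (b ++ t) → Lex r a b ∨ a = b
  | [], [], _, _, _, _ => Or.inr rfl
  | x :: a, y :: b, s, t, hlen, h => by
    cases h with
    | cons h =>
      rcases left_or_eq_of_append (by simpa using hlen) h with h' | rfl
      · exact Or.inl (Lex.cons h')
      · exact Or.inr rfl
    | rel h => exact Or.inl (Lex.rel h)

theorem Lex.reverse_tail_append_singleton {r : α → α → Prop} {u u' : List α} (c : α)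
    (hlen : u.length = u'.length) (h : Lex r u.reverse u'.reverse) :
    Lex r (u.tail ++ [c]).reverse (u'.tail ++ [c]).reverse ∨ u.tail ++ [c] = u'.tail ++ [c] := by
  match u, u' with
  | [], [] => exact absurd h not_lex_nil
  | a :: t, a' :: t' =>
    rw [reverse_cons, reverse_cons] at h
    rcases left_or_eq_of_append (by simpa using hlen) h with h' | h'
    · exact Or.inl (by simpa using Lex.cons h')
    · exact Or.inr (by simpa using h')

end List

/-- An order-k de Bruijn graph (nodes: k-mers, edge `(u,v)` labeled `c` when
`v = u[2..k]·c`; every node without incoming edges is the sentinel node `$^k`,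
`$` being strictly smaller than every other symbol), ordered by the
lexicographic order of the reversed k-mers, is a Wheeler graph. -/
theorem stmt_2 {A : Type} [LinearOrder A] (k : ℕ) (dollar : A)
    (hdollar : ∀ a : A, a ≠ dollar → dollar < a)
    (nodes : Set (List A))
    (hlen : ∀ v ∈ nodes, v.length = k)
    (E : List A → List A → A → Prop)
    (hE : ∀ u v c, E u v c → u ∈ nodes ∧ v ∈ nodes ∧ v = u.tail ++ [c])
    (hsrc : ∀ v ∈ nodes, (∀ u c, ¬ E u v c) → v = List.replicate k dollar) :
    (∀ v ∈ nodes, ∀ w ∈ nodes, (∀ u c, ¬ E u v c) → (∃ u c, E u w c) →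
        List.Lex (· < ·) v.reverse w.reverse) ∧
    (∀ u v c u' v' c', E u v c → E u' v' c' →
      (c < c' → List.Lex (· < ·) v.reverse v'.reverse) ∧
      (c = c' → List.Lex (· < ·) u.reverse u'.reverse →
        List.Lex (· < ·) v.reverse v'.reverse ∨ v = v')) := by
  have hbot : IsBot dollar := fun a => by
    by_cases ha : a = dollar
    · exact ha.ge
    · exact (hdollar a ha).le
  refine ⟨fun v hv w hw hnov ⟨u, c, huw⟩ => ?_, fun u v c u' v' c' h h' => ?_⟩
  · obtain rfl := hsrc v hv hnov
    have hwne : w.reverse ≠ List.replicate w.reverse.length dollar := by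
      rintro hrev
      rw [List.reverse_eq_iff, List.reverse_replicate, List.length_reverse, hlen w hw] at hrev
      exact hnov u c (hrev ▸ huw)
    simpa [hlen w hw] using List.lex_replicate_of_isBot hbot hwne
  · obtain ⟨hu, -, rfl⟩ := hE u v c h
    obtain ⟨hu', -, rfl⟩ := hE u' v' c' h'
    refine ⟨fun hcc => by simpa using List.Lex.rel hcc, ?_⟩
    rintro rfl hlex
    exact hlex.reverse_tail_append_singleton c ((hlen u hu).trans (hlen u' hu').symm)
end

section
/- Let G0 and G1 be two order-k de Bruijn graphs with colexicographically sorted node k-mers. Define Z_1 as in equation (8): the bit string 01 followed, for each symbol c in increasing order, by ℓ0(c) zeros and ℓ1(c) ones, where ℓb(c) counts nodes of Gb whose k-mer ends in c. Then Z_1 satisfies Property 1 for h=1: the i-th 0 precedes the j-th 1 in Z_1 if and only if the reversed k-mer of the i-th node of G0, restricted to its first symbol, is lexicographically ≤ the reversed k-mer of the j-th node of G1 restricted to its first symbol. -/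
/-- Positions (0-based) of the occurrences of bit `b` in a list of booleans. -/
def occPos (l : List Bool) (b : Bool) : List ℕ :=
  (List.range l.length).filter (fun p => l.getD p (!b) == b)

/-!
Write `K i = (v i).reverse.take 1` and `L j = (w j).reverse.take 1`; both key sequences are
sorted. List all possible keys increasingly: first the sentinel key `($^k).take 1` (that is `[$]`,
or `[]` when `k = 0`), which only `v_1` and `w_1` carry and which accounts for the prefix `01`,
then the singletons `[c]`, `c ≠ $`. For each key in turn, `Z_1` writes one `0` per occurrence
among the `K i` followed by one `1` per occurrence among the `L j`. So `Z_1` records the stable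
merge of the two sorted key lists, and in such a merge the `i`-th `0` precedes the `j`-th `1`
exactly when `K i ≤ L j`.
-/

open List

theorem occPos_cons (x : Bool) (l : List Bool) (b : Bool) :
    occPos (x :: l) b = (if x = b then [0] else []) ++ (occPos l b).map (· + 1) := by
  unfold occPos
  rw [length_cons, range_succ_eq_map, filter_cons, filter_map]
  cases x <;> cases b <;> rfl

theorem length_occPos (l : List Bool) (b : Bool) : (occPos l b).length = l.count b := by
  induction l with
  | nil => rfl
  | cons x l ih => cases x <;> cases b <;> simp [occPos_cons, ih]

theorem getD_map_add_one {l : List ℕ} {i : ℕ} (hi : i < l.length) :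
    (l.map (· + 1)).getD i 0 = l.getD i 0 + 1 := by
  simp [hi]

def ZeroBeforeOne : List Bool → ℕ → ℕ → Prop
  | [], _, _ => False
  | false :: _, 0, _ => True
  | false :: Z, i + 1, j => ZeroBeforeOne Z i j
  | true :: _, _, 0 => False
  | true :: Z, i, j + 1 => ZeroBeforeOne Z i j

theorem getD_occPos_lt_iff {Z : List Bool} {i j : ℕ} (hi : i < Z.count false)
    (hj : j < Z.count true) :
    (occPos Z false).getD i 0 < (occPos Z true).getD j 0 ↔ ZeroBeforeOne Z i j := by
  induction Z generalizing i j with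
  | nil => simp at hi
  | cons x Z ih =>
    have hf := length_occPos Z false
    have ht := length_occPos Z true
    cases x
    · rw [count_cons_self] at hi
      rw [count_cons_of_ne (by decide)] at hj
      rcases i with _ | i
      · simp only [occPos_cons, ↓reduceIte, Bool.false_eq_true, singleton_append, nil_append,
          getD_cons_zero, getD_map_add_one (ht ▸ hj), ZeroBeforeOne]
        simp
      · simp only [occPos_cons, ↓reduceIte, Bool.false_eq_true, singleton_append, nil_append,
          getD_cons_succ, getD_map_add_one (ht ▸ hj),
          getD_map_add_one (hf ▸ Nat.lt_of_add_lt_add_right hi), ZeroBeforeOne,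
          Nat.add_lt_add_iff_right]
        exact ih (by omega) hj
    · rw [count_cons_self] at hj
      rw [count_cons_of_ne (by decide)] at hi
      rcases j with _ | j
      · simp only [occPos_cons, ↓reduceIte, Bool.true_eq_false, singleton_append, nil_append,
          getD_cons_zero, getD_map_add_one (hf ▸ hi), ZeroBeforeOne]
        simp
      · simp only [occPos_cons, ↓reduceIte, Bool.true_eq_false, singleton_append, nil_append,
          getD_cons_succ, getD_map_add_one (hf ▸ hi),
          getD_map_add_one (ht ▸ Nat.lt_of_add_lt_add_right hj), ZeroBeforeOne,
          Nat.add_lt_add_iff_right]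
        exact ih hi (by omega)

theorem zeroBeforeOne_replicate_false_append_of_lt {a i : ℕ} (Z : List Bool) (j : ℕ)
    (h : i < a) : ZeroBeforeOne (replicate a false ++ Z) i j := by
  induction a generalizing i with
  | zero => omega
  | succ a ih =>
    rcases i with _ | i
    · trivial
    · exact ih (by omega)

theorem zeroBeforeOne_replicate_false_append_add (a : ℕ) (Z : List Bool) (i j : ℕ) :
    ZeroBeforeOne (replicate a false ++ Z) (a + i) j ↔ ZeroBeforeOne Z i j := by
  induction a with
  | zero => simp
  | succ a ih => rw [Nat.add_right_comm]; exact ih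

theorem not_zeroBeforeOne_replicate_true_append_of_lt {b j : ℕ} (Z : List Bool) (i : ℕ)
    (h : j < b) : ¬ ZeroBeforeOne (replicate b true ++ Z) i j := by
  induction b generalizing j with
  | zero => omega
  | succ b ih =>
    rcases j with _ | j
    · exact id
    · exact ih (by omega)

theorem zeroBeforeOne_replicate_true_append_add (b : ℕ) (Z : List Bool) (i j : ℕ) :
    ZeroBeforeOne (replicate b true ++ Z) i (b + j) ↔ ZeroBeforeOne Z i j := by
  induction b with
  | zero => simp
  | succ b ih => rw [Nat.add_right_comm]; exact ih

theorem List.count_ofFn {α : Type*} [BEq α] [LawfulBEq α] [DecidableEq α] {n : ℕ}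
    (f : Fin n → α) (c : α) :
    (ofFn f).count c = (Finset.univ.filter fun i => f i = c).card := by
  obtain rfl : ‹BEq α› = instBEqOfDecidableEq := lawful_beq_subsingleton _ _
  rw [← Multiset.coe_count, ← Fin.univ_val_map, Multiset.count_map, Finset.card_def,
    Finset.filter_val]
  simp only [eq_comm]

theorem List.take_one_monotone {A : Type*} [LinearOrder A] :
    Monotone (take 1 : List A → List A) := by
  intro l l' hle
  rcases hle.lt_or_eq with hlt | rfl
  · cases hlt with
    | nil => exact le_of_lt Lex.nil
    | rel h => exact le_of_lt ((lex_singleton_iff _ _).mpr h)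
    | cons => simp
  · rfl

def mergeBits {A : Type*} [BEq A] (cs F G : List A) : List Bool :=
  cs.flatMap fun c => replicate (F.count c) false ++ replicate (G.count c) true

theorem count_false_mergeBits {A : Type*} [BEq A] [LawfulBEq A] (cs F G : List A) :
    (mergeBits cs F G).count false = (cs.flatMap fun c => replicate (F.count c) c).length := by
  simp [mergeBits, count_flatMap, length_flatMap, Function.comp_def, count_replicate]

theorem count_true_mergeBits {A : Type*} [BEq A] [LawfulBEq A] (cs F G : List A) :
    (mergeBits cs F G).count true = (cs.flatMap fun c => replicate (G.count c) c).length := by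
  simp [mergeBits, count_flatMap, length_flatMap, Function.comp_def, count_replicate]

section Merge

variable {A : Type*} [LinearOrder A]

theorem zeroBeforeOne_flatMap_iff {cs F G : List A} (hcs : cs.Pairwise (· < ·)) (a b : A → ℕ)
    (hF : cs.flatMap (fun c => replicate (a c) c) = F)
    (hG : cs.flatMap (fun c => replicate (b c) c) = G) {i j : ℕ}
    (hi : i < F.length) (hj : j < G.length) :
    ZeroBeforeOne (cs.flatMap fun c => replicate (a c) false ++ replicate (b c) true) i j ↔
      F[i] ≤ G[j] := by
  subst hF hG
  induction cs generalizing i j with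
  | nil => simp at hi
  | cons c cs ih =>
    rw [pairwise_cons] at hcs
    have hlt : ∀ (n : A → ℕ) x, x ∈ cs.flatMap (fun c => replicate (n c) c) → c < x := by
      intro n x hx
      obtain ⟨d, hd, hx⟩ := mem_flatMap.mp hx
      exact (eq_of_mem_replicate hx) ▸ hcs.1 d hd
    simp only [flatMap_cons, append_assoc] at hi hj ⊢
    rcases lt_or_ge i (a c) with hia | hia
    · rw [getElem_append_left (by simpa using hia), getElem_replicate]
      refine iff_of_true (zeroBeforeOne_replicate_false_append_of_lt _ _ hia) ?_
      rw [getElem_append]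
      split
      · simp
      · exact (hlt _ _ (getElem_mem _)).le
    obtain ⟨i, rfl⟩ := Nat.exists_eq_add_of_le hia
    rw [zeroBeforeOne_replicate_false_append_add, getElem_append_right (by simp),
      getElem_congr_idx (by simp : a c + i - (replicate (a c) c).length = i)]
    rcases lt_or_ge j (b c) with hjb | hjb
    · rw [getElem_append_left (by simpa using hjb), getElem_replicate]
      exact iff_of_false (not_zeroBeforeOne_replicate_true_append_of_lt _ _ hjb)
        (not_le.mpr (hlt _ _ (getElem_mem _)))
    obtain ⟨j, rfl⟩ := Nat.exists_eq_add_of_le hjb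
    rw [zeroBeforeOne_replicate_true_append_add, getElem_append_right (by simp),
      getElem_congr_idx (by simp : b c + j - (replicate (b c) c).length = j)]
    exact ih hcs.2 (by simpa using hi) (by simpa using hj)

variable [BEq A] [LawfulBEq A]

theorem flatMap_replicate_count {cs F : List A} (hcs : cs.SortedLT) (hF : F.SortedLE)
    (hFcs : ∀ x ∈ F, x ∈ cs) : cs.flatMap (fun c => replicate (F.count c) c) = F := by
  refine Perm.eq_of_sortedLE ?_ hF (perm_iff_count.mpr fun x => ?_)
  · refine Pairwise.sortedLE (pairwise_flatMap.mpr
      ⟨fun c _ => pairwise_replicate.mpr (Or.inr le_rfl), hcs.pairwise.imp ?_⟩)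
    intro c d hcd x hx y hy
    rw [eq_of_mem_replicate hx, eq_of_mem_replicate hy]
    exact hcd.le
  · rw [count_flatMap, ← sum_toFinset _ hcs.nodup]
    simp only [Function.comp_apply, count_replicate, beq_iff_eq]
    rw [Finset.sum_ite_eq']
    split_ifs with hx
    · rfl
    · exact (count_eq_zero_of_not_mem fun hxF => hx (mem_toFinset.mpr (hFcs x hxF))).symm

theorem getD_occPos_mergeBits_lt_iff {cs F G : List A} (hcs : cs.SortedLT) (hF : F.SortedLE)
    (hG : G.SortedLE) (hFcs : ∀ x ∈ F, x ∈ cs) (hGcs : ∀ x ∈ G, x ∈ cs) {i j : ℕ}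
    (hi : i < F.length) (hj : j < G.length) :
    (occPos (mergeBits cs F G) false).getD i 0 < (occPos (mergeBits cs F G) true).getD j 0 ↔
      F[i] ≤ G[j] := by
  have hF' := flatMap_replicate_count hcs hF hFcs
  have hG' := flatMap_replicate_count hcs hG hGcs
  rw [getD_occPos_lt_iff (by rwa [count_false_mergeBits, hF'])
    (by rwa [count_true_mergeBits, hG'])]
  exact zeroBeforeOne_flatMap_iff hcs.pairwise _ _ hF' hG' hi hj

end Merge

section SentinelKeys

variable {A : Type*} [LinearOrder A]

theorem take_one_replicate_lt_singleton (k : ℕ) {d c : A} (h : d < c) :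
    (replicate k d).take 1 < [c] := by
  cases k with
  | zero => exact Lex.nil
  | succ k => exact (lex_singleton_iff _ _).mpr h

theorem sortedLT_take_one_replicate_cons [Fintype A] [DecidableEq A] {d : A}
    (hd : ∀ a, a ≠ d → d < a) (k : ℕ) :
    ((replicate k d).take 1 :: ((Finset.univ.erase d).sort (· ≤ ·)).map ([·])).SortedLT := by
  rw [sortedLT_iff_pairwise, pairwise_cons, pairwise_map]
  refine ⟨?_, (Finset.sortedLT_sort _).pairwise.imp (lex_singleton_iff _ _).mpr⟩
  simp only [mem_map, Finset.mem_sort, Finset.mem_erase]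
  rintro _ ⟨c, ⟨hc, -⟩, rfl⟩
  exact take_one_replicate_lt_singleton k (hd c hc)

variable {n k : ℕ} {d : A} {u : Fin n → List A}

theorem exists_take_one_reverse_eq_singleton (hd : ∀ a, a ≠ d → d < a)
    (hu : StrictMono fun i => (u i).reverse)
    (hno : ∀ i : Fin n, 0 < i.val → (u i).reverse.take 1 ≠ [d]) (i : Fin n) (hi : 0 < i.val) :
    ∃ c, d < c ∧ (u i).reverse.take 1 = [c] := by
  have hlt : (u ⟨0, i.pos⟩).reverse < (u i).reverse :=
    hu (show (⟨0, i.pos⟩ : Fin n) < i from hi)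
  rcases hrev : (u i).reverse with _ | ⟨c, l⟩
  · rw [hrev] at hlt
    exact (not_lt_nil _ hlt).elim
  · refine ⟨c, hd c ?_, by simp⟩
    rintro rfl
    exact hno i hi (by simp [hrev])

theorem take_one_reverse_eq_take_one_replicate_iff (hd : ∀ a, a ≠ d → d < a)
    (hu : StrictMono fun i => (u i).reverse) (hu0 : ∀ h : 0 < n, u ⟨0, h⟩ = replicate k d)
    (hno : ∀ i : Fin n, 0 < i.val → (u i).reverse.take 1 ≠ [d]) (i : Fin n) :
    (u i).reverse.take 1 = (replicate k d).take 1 ↔ i.val = 0 := by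
  refine ⟨fun h => ?_, fun h => ?_⟩
  · by_contra hi
    obtain ⟨c, hc, hi⟩ :=
      exists_take_one_reverse_eq_singleton hd hu hno i (Nat.pos_of_ne_zero hi)
    exact (take_one_replicate_lt_singleton k hc).ne (h ▸ hi)
  · rw [show i = ⟨0, i.pos⟩ from Fin.ext h, hu0, reverse_replicate]

theorem count_ofFn_take_one_reverse_eq_one [DecidableEq A] (hd : ∀ a, a ≠ d → d < a)
    (hu : StrictMono fun i => (u i).reverse) (hu0 : ∀ h : 0 < n, u ⟨0, h⟩ = replicate k d)
    (hno : ∀ i : Fin n, 0 < i.val → (u i).reverse.take 1 ≠ [d]) (hn : 0 < n) :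
    (ofFn fun i => (u i).reverse.take 1).count ((replicate k d).take 1) = 1 := by
  rw [count_ofFn, Finset.card_eq_one]
  refine ⟨⟨0, hn⟩, ?_⟩
  ext i
  rw [Finset.mem_filter, take_one_reverse_eq_take_one_replicate_iff hd hu hu0 hno,
    Finset.mem_singleton, Fin.ext_iff]
  simp

theorem sortedLE_ofFn_take_one_reverse (hu : StrictMono fun i => (u i).reverse) :
    (ofFn fun i => (u i).reverse.take 1).SortedLE :=
  (take_one_monotone.comp hu.monotone).sortedLE_ofFn

theorem mem_take_one_replicate_cons_of_mem_ofFn [Fintype A] [DecidableEq A]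
    (hd : ∀ a, a ≠ d → d < a)
    (hu : StrictMono fun i => (u i).reverse) (hu0 : ∀ h : 0 < n, u ⟨0, h⟩ = replicate k d)
    (hno : ∀ i : Fin n, 0 < i.val → (u i).reverse.take 1 ≠ [d]) :
    ∀ x ∈ ofFn fun i => (u i).reverse.take 1,
      x ∈ (replicate k d).take 1 :: ((Finset.univ.erase d).sort (· ≤ ·)).map ([·]) := by
  simp only [mem_ofFn, forall_exists_index]
  rintro _ i rfl
  rcases Nat.eq_zero_or_pos i.val with hi | hi
  · rw [(take_one_reverse_eq_take_one_replicate_iff hd hu hu0 hno i).mpr hi]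
    exact mem_cons_self
  · obtain ⟨c, hc, hi⟩ := exists_take_one_reverse_eq_singleton hd hu hno i hi
    simp [hi, hc.ne']

end SentinelKeys

theorem stmt_3_general {A : Type} [LinearOrder A] [Fintype A] [DecidableEq A]
    (k n0 n1 : ℕ) (dollar : A)
    (hdollar : ∀ a : A, a ≠ dollar → dollar < a)
    (v : Fin n0 → List A) (w : Fin n1 → List A)
    (hsv : ∀ i i' : Fin n0, i < i' → List.Lex (· < ·) (v i).reverse (v i').reverse)
    (hsw : ∀ j j' : Fin n1, j < j' → List.Lex (· < ·) (w j).reverse (w j').reverse)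
    (hv0 : ∀ h0 : 0 < n0, v ⟨0, h0⟩ = List.replicate k dollar)
    (hw0 : ∀ h1 : 0 < n1, w ⟨0, h1⟩ = List.replicate k dollar)
    (hvno : ∀ i : Fin n0, (0:ℕ) < i.val → (v i).reverse.take 1 ≠ [dollar])
    (hwno : ∀ j : Fin n1, (0:ℕ) < j.val → (w j).reverse.take 1 ≠ [dollar])
    (l0 l1 : A → ℕ)
    (hl0 : ∀ c, l0 c =
      (Finset.univ.filter (fun i : Fin n0 => (v i).reverse.take 1 = [c])).card)
    (hl1 : ∀ c, l1 c =
      (Finset.univ.filter (fun j : Fin n1 => (w j).reverse.take 1 = [c])).card)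
    (Z1 : List Bool)
    (hZ1 : Z1 = [false, true] ++
      (Finset.sort (Finset.univ.erase dollar : Finset A) (· ≤ ·)).flatMap
        (fun c => List.replicate (l0 c) false ++ List.replicate (l1 c) true)) :
    ∀ (i : Fin n0) (j : Fin n1),
      (occPos Z1 false).getD i.val 0 < (occPos Z1 true).getD j.val 0 ↔
        (List.Lex (· < ·) ((v i).reverse.take 1) ((w j).reverse.take 1) ∨
          (v i).reverse.take 1 = (w j).reverse.take 1) := by
  intro i j
  have hZ : Z1 = mergeBits
      ((List.replicate k dollar).take 1 ::
        ((Finset.univ.erase dollar).sort (· ≤ ·)).map ([·]))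
      (ofFn fun i => (v i).reverse.take 1) (ofFn fun j => (w j).reverse.take 1) := by
    rw [hZ1, mergeBits, flatMap_cons, flatMap_map,
      count_ofFn_take_one_reverse_eq_one hdollar hsv hv0 hvno i.pos,
      count_ofFn_take_one_reverse_eq_one hdollar hsw hw0 hwno j.pos]
    simp only [hl0, hl1, count_ofFn]
    rfl
  rw [hZ, getD_occPos_mergeBits_lt_iff (sortedLT_take_one_replicate_cons hdollar k)
    (sortedLE_ofFn_take_one_reverse hsv)
    (sortedLE_ofFn_take_one_reverse hsw)
    (mem_take_one_replicate_cons_of_mem_ofFn hdollar hsv hv0 hvno)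
    (mem_take_one_replicate_cons_of_mem_ofFn hdollar hsw hw0 hwno) (by simp) (by simp),
    List.getElem_ofFn, List.getElem_ofFn, le_iff_lt_or_eq]
  rfl

/-- The bitvector `Z_1 = 01 · 0^{ℓ0(1)}1^{ℓ1(1)} ⋯ 0^{ℓ0(σ)}1^{ℓ1(σ)}`
(symbols of the alphabet different from the sentinel taken in increasing order,
`ℓb(c)` = number of nodes of `G_b` whose k-mer ends with `c`, i.e. whose
reversed k-mer starts with `c`) satisfies Property 1 for `h = 1`:
the `i`-th 0 precedes the `j`-th 1 iff the length-1 prefix of the reversed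
k-mer of `v_i` is lexicographically ≤ that of `w_j`. -/
theorem stmt_3 {A : Type} [LinearOrder A] [Fintype A] [DecidableEq A]
    (k n0 n1 : ℕ) (dollar : A)
    (hdollar : ∀ a : A, a ≠ dollar → dollar < a)
    (v : Fin n0 → List A) (w : Fin n1 → List A)
    (hlv : ∀ i, (v i).length = k) (hlw : ∀ j, (w j).length = k)
    (hsv : ∀ i i' : Fin n0, i < i' → List.Lex (· < ·) (v i).reverse (v i').reverse)
    (hsw : ∀ j j' : Fin n1, j < j' → List.Lex (· < ·) (w j).reverse (w j').reverse)
    (hv0 : ∀ h0 : 0 < n0, v ⟨0, h0⟩ = List.replicate k dollar)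
    (hw0 : ∀ h1 : 0 < n1, w ⟨0, h1⟩ = List.replicate k dollar)
    (hvno : ∀ i : Fin n0, (0:ℕ) < i.val → (v i).reverse.take 1 ≠ [dollar])
    (hwno : ∀ j : Fin n1, (0:ℕ) < j.val → (w j).reverse.take 1 ≠ [dollar])
    (l0 l1 : A → ℕ)
    (hl0 : ∀ c, l0 c =
      (Finset.univ.filter (fun i : Fin n0 => (v i).reverse.take 1 = [c])).card)
    (hl1 : ∀ c, l1 c =
      (Finset.univ.filter (fun j : Fin n1 => (w j).reverse.take 1 = [c])).card)
    (Z1 : List Bool)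
    (hZ1 : Z1 = [false, true] ++
      (Finset.sort (Finset.univ.erase dollar : Finset A) (· ≤ ·)).flatMap
        (fun c => List.replicate (l0 c) false ++ List.replicate (l1 c) true)) :
    ∀ (i : Fin n0) (j : Fin n1),
      (occPos Z1 false).getD i.val 0 < (occPos Z1 true).getD j.val 0 ↔
        (List.Lex (· < ·) ((v i).reverse.take 1) ((w j).reverse.take 1) ∨
          (v i).reverse.take 1 = (w j).reverse.take 1) :=
  stmt_3_general k n0 n1 dollar hdollar v w hsv hsw hv0 hw0 hvno hwno l0 l1 hl0 hl1 Z1 hZ1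
end

section
/- Let P_0,...,P_k be a W-consistent partition of the nodes of the union automaton U and let v ≠ v' be two nodes in the same block P_h having the same incoming label. If there exist edges (u,v) and (u',v') with u ∈ P_i, u' ∈ P_j and i < j, then in every Wheeler C-order of U it must hold that v < v'. -/
section

variable {V A : Type}

/-- `r` is a strict total order. -/
def StrictTotal (r : V → V → Prop) : Prop :=
  (∀ x, ¬ r x x) ∧ (∀ x y z, r x y → r y z → r x z) ∧
  (∀ x y, x ≠ y → r x y ∨ r y x)

/-- `r` is a Wheeler order for the labeled graph `E`. -/
def IsWheelerOrder [LinearOrder A] (E : V → V → A → Prop) (r : V → V → Prop) : Prop :=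
  StrictTotal r ∧
  (∀ v w, (∀ u a, ¬ E u v a) → (∃ u a, E u w a) → r v w) ∧
  (∀ u v a u' v' a', E u v a → E u' v' a' →
    (a < a' → r v v') ∧ (a = a' → r u u' → r v v' ∨ v = v'))

/-- `r` preserves the order of the node sequence `f 0, …, f (n-1)`. -/
def CompatSeq (f : ℕ → V) (n : ℕ) (r : V → V → Prop) : Prop :=
  ∀ i j, i < j → j < n → r (f i) (f j)

/-- A Wheeler C-order of the union automaton: a Wheeler order compatible with
the original orders of the nodes of the two input automata. -/
def IsWheelerCOrder [LinearOrder A] (E : V → V → A → Prop)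
    (f0 : ℕ → V) (n0 : ℕ) (f1 : ℕ → V) (n1 : ℕ) (r : V → V → Prop) : Prop :=
  IsWheelerOrder E r ∧ CompatSeq f0 n0 r ∧ CompatSeq f1 n1 r

/-- The ordered partition `P 0, …, P k` is W-consistent: block indices are
respected by every Wheeler C-order. -/
def WConsistent [LinearOrder A] (E : V → V → A → Prop)
    (f0 : ℕ → V) (n0 : ℕ) (f1 : ℕ → V) (n1 : ℕ)
    (P : ℕ → Set V) (k : ℕ) : Prop :=
  ∀ r, IsWheelerCOrder E f0 n0 f1 n1 r →
    ∀ i j x y, i < j → j ≤ k → x ∈ P i → y ∈ P j → r x y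

theorem IsWheelerOrder.rel_target_of_rel_source [LinearOrder A] {E : V → V → A → Prop}
    {r : V → V → Prop} (hr : IsWheelerOrder E r) {u v u' v' : V} {a : A}
    (he : E u v a) (he' : E u' v' a) (huu' : r u u') (hne : v ≠ v') : r v v' :=
  ((hr.2.2 u v a u' v' a he he').2 rfl huu').resolve_right hne

theorem stmt_7_general [LinearOrder A] (E : V → V → A → Prop)
    (f0 : ℕ → V) (n0 : ℕ) (f1 : ℕ → V) (n1 : ℕ)
    (P : ℕ → Set V) (k : ℕ)
    (hW : WConsistent E f0 n0 f1 n1 P k)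
    (v v' : V) (hne : v ≠ v')
    (a : A)
    (u u' : V) (i j : ℕ) (hij : i < j) (hjk : j ≤ k)
    (hui : u ∈ P i) (huj : u' ∈ P j)
    (he : E u v a) (he' : E u' v' a) :
    ∀ r, IsWheelerCOrder E f0 n0 f1 n1 r → r v v' := by
  intro r hr
  exact hr.1.rel_target_of_rel_source he he' (hW r hr i j u u' hij hjk hui huj) hne

/-- Lemma 6 of the paper: if `v ≠ v'` lie in the same block of a W-consistent
partition, have the same incoming label, and there are edges `(u,v)`, `(u',v')`
with `u ∈ P i`, `u' ∈ P j`, `i < j`, then `v < v'` in every Wheeler C-order. -/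
theorem stmt_7 [LinearOrder A] (E : V → V → A → Prop)
    (f0 : ℕ → V) (n0 : ℕ) (f1 : ℕ → V) (n1 : ℕ)
    (P : ℕ → Set V) (k : ℕ)
    (hW : WConsistent E f0 n0 f1 n1 P k)
    (h : ℕ) (hhk : h ≤ k) (v v' : V) (hne : v ≠ v')
    (hv : v ∈ P h) (hv' : v' ∈ P h)
    (a : A)
    (hlabv : ∀ u b, E u v b → b = a) (hlabv' : ∀ u b, E u v' b → b = a)
    (u u' : V) (i j : ℕ) (hij : i < j) (hjk : j ≤ k)
    (hui : u ∈ P i) (huj : u' ∈ P j)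
    (he : E u v a) (he' : E u' v' a) :
    ∀ r, IsWheelerCOrder E f0 n0 f1 n1 r → r v v' :=
  stmt_7_general E f0 n0 f1 n1 P k hW v v' hne a u u' i j hij hjk hui huj he he'

end
end

section
/- Let P_0,...,P_k be a W-consistent partition of the union automaton, and let v ≠ v' be nodes in the same block with λ(v)=λ(v'). Let (ℓ,m) and (ℓ',m') be their minmax pairs: ℓ (resp. m) is the smallest (resp. largest) block index from which an edge reaches v, similarly ℓ',m' for v'. If not all of ℓ=m=ℓ'=m' hold, then: m ≤ ℓ' implies v < v' in every Wheeler C-order, and m' ≤ ℓ implies v > v' in every Wheeler C-order. Moreover, if neither m ≤ ℓ' nor m' ≤ ℓ holds, then no Wheeler C-order of the union automaton exists. -/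
section

variable {V A : Type}

/-- `(ℓ,m)` is the minmax pair of `v` w.r.t. the partition `P`: `ℓ` (resp. `m`)
is the smallest (resp. largest) block index from which an edge reaches `v`. -/
def IsMinmax [LinearOrder A] (E : V → V → A → Prop) (P : ℕ → Set V)
    (v : V) (l m : ℕ) : Prop :=
  (∃ u ∈ P l, ∃ a, E u v a) ∧ (∃ u ∈ P m, ∃ a, E u v a) ∧
  (∀ i, (∃ u ∈ P i, ∃ a, E u v a) → l ≤ i ∧ i ≤ m)

/-!
In any Wheeler C-order `r`, W-consistency orders predecessors lying in distinct blocks, and the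
Wheeler axiom propagates this order to equally labelled successors. So a predecessor of `v` in a
block strictly before a block holding a predecessor of `v'` forces `r v v'`. When `m ≤ ℓ'` and the
four indices are not all equal, either `m < ℓ'`, `ℓ < ℓ'` or `m < m'`, which supplies such a pair of
blocks. When both `m > ℓ'` and `m' > ℓ`, the pairs `(ℓ, m')` and `(ℓ', m)` force `r v v'` and
`r v' v` simultaneously, which no strict order allows.
-/

section

variable [LinearOrder A] {E : V → V → A → Prop}
  {f0 : ℕ → V} {n0 : ℕ} {f1 : ℕ → V} {n1 : ℕ} {P : ℕ → Set V} {k : ℕ}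

theorem StrictTotal.not_rel_of_rel {r : V → V → Prop} (hr : StrictTotal r) {x y : V}
    (hxy : r x y) : ¬ r y x :=
  fun hyx => hr.1 x (hr.2.1 x y x hxy hyx)

theorem IsWheelerOrder.rel_of_rel_pred {r : V → V → Prop} (hr : IsWheelerOrder E r)
    {u x u' y : V} {a : A} (hxy : x ≠ y) (hux : E u x a) (huy : E u' y a) (huu' : r u u') :
    r x y :=
  ((hr.2.2 u x a u' y a hux huy).2 rfl huu').resolve_right hxy

theorem WConsistent.rel_of_pred_mem_lt (hW : WConsistent E f0 n0 f1 n1 P k)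
    {r : V → V → Prop} (hr : IsWheelerCOrder E f0 n0 f1 n1 r) {x y : V} (hxy : x ≠ y) {a : A}
    (hx : ∀ u b, E u x b → b = a) (hy : ∀ u b, E u y b → b = a) {i j : ℕ} (hij : i < j)
    (hjk : j ≤ k) (hpx : ∃ u ∈ P i, ∃ b, E u x b) (hpy : ∃ u ∈ P j, ∃ b, E u y b) :
    r x y := by
  obtain ⟨u, hu, b, hux⟩ := hpx
  obtain ⟨u', hu', b', huy⟩ := hpy
  obtain rfl := hx u b hux
  obtain rfl := hy u' b' huy
  exact hr.1.rel_of_rel_pred hxy hux huy (hW r hr i j u u' hij hjk hu hu')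

theorem IsMinmax.le {v : V} {l m : ℕ} (hmm : IsMinmax E P v l m) : l ≤ m :=
  (hmm.2.2 l hmm.1).2

theorem WConsistent.rel_of_minmax_le (hW : WConsistent E f0 n0 f1 n1 P k)
    {r : V → V → Prop} (hr : IsWheelerCOrder E f0 n0 f1 n1 r) {v v' : V} (hne : v ≠ v') {a : A}
    (hlabv : ∀ u b, E u v b → b = a) (hlabv' : ∀ u b, E u v' b → b = a)
    {l m l' m' : ℕ} (hm'k : m' ≤ k)
    (hmm : IsMinmax E P v l m) (hmm' : IsMinmax E P v' l' m')
    (hnotall : ¬ (l = m ∧ m = l' ∧ l' = m')) (hml' : m ≤ l') : r v v' := by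
  have hlm := hmm.le
  have hlm' := hmm'.le
  obtain hlt | hlt | hlt : m < l' ∨ l < l' ∨ m < m' := by omega
  · exact hW.rel_of_pred_mem_lt hr hne hlabv hlabv' hlt (by omega) hmm.2.1 hmm'.1
  · exact hW.rel_of_pred_mem_lt hr hne hlabv hlabv' hlt (by omega) hmm.1 hmm'.1
  · exact hW.rel_of_pred_mem_lt hr hne hlabv hlabv' hlt hm'k hmm.2.1 hmm'.2.1

end

theorem stmt_8_general [LinearOrder A] (E : V → V → A → Prop)
    (f0 : ℕ → V) (n0 : ℕ) (f1 : ℕ → V) (n1 : ℕ)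
    (P : ℕ → Set V) (k : ℕ)
    (hW : WConsistent E f0 n0 f1 n1 P k)
    (v v' : V) (hne : v ≠ v')
    (a : A)
    (hlabv : ∀ u b, E u v b → b = a) (hlabv' : ∀ u b, E u v' b → b = a)
    (l m l' m' : ℕ) (hlmk : m ≤ k) (hlmk' : m' ≤ k)
    (hmm : IsMinmax E P v l m) (hmm' : IsMinmax E P v' l' m')
    (hnotall : ¬ (l = m ∧ m = l' ∧ l' = m')) :
    ((m ≤ l' → ∀ r, IsWheelerCOrder E f0 n0 f1 n1 r → r v v') ∧
     (m' ≤ l → ∀ r, IsWheelerCOrder E f0 n0 f1 n1 r → r v' v) ∧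
     (¬ (m ≤ l') → ¬ (m' ≤ l) →
        ¬ ∃ r, IsWheelerCOrder E f0 n0 f1 n1 r)) := by
  have hnotall' : ¬ (l' = m' ∧ m' = l ∧ l = m) := by omega
  refine ⟨fun hml' r hr => hW.rel_of_minmax_le hr hne hlabv hlabv' hlmk' hmm hmm' hnotall hml',
    fun hm'l r hr =>
      hW.rel_of_minmax_le hr hne.symm hlabv' hlabv hlmk hmm' hmm hnotall' hm'l, ?_⟩
  rintro hml' hm'l ⟨r, hr⟩
  have hvv' : r v v' :=
    hW.rel_of_pred_mem_lt hr hne hlabv hlabv' (by omega) hlmk' hmm.1 hmm'.2.1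
  have hv'v : r v' v :=
    hW.rel_of_pred_mem_lt hr hne.symm hlabv' hlabv (by omega) hlmk hmm'.1 hmm.2.1
  exact hr.1.1.not_rel_of_rel hvv' hv'v

/-- Lemma 7 of the paper.  Let `v ≠ v'` be in the same block of a W-consistent
partition with the same incoming label, with minmax pairs `(ℓ,m)` and `(ℓ',m')`
not all equal.  Then `m ≤ ℓ'` forces `v < v'` and `m' ≤ ℓ` forces `v' < v` in
every Wheeler C-order; and if neither holds, no Wheeler C-order exists. -/
theorem stmt_8 [LinearOrder A] (E : V → V → A → Prop)
    (f0 : ℕ → V) (n0 : ℕ) (f1 : ℕ → V) (n1 : ℕ)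
    (P : ℕ → Set V) (k : ℕ)
    (hW : WConsistent E f0 n0 f1 n1 P k)
    (h : ℕ) (hhk : h ≤ k) (v v' : V) (hne : v ≠ v')
    (hv : v ∈ P h) (hv' : v' ∈ P h)
    (a : A)
    (hlabv : ∀ u b, E u v b → b = a) (hlabv' : ∀ u b, E u v' b → b = a)
    (l m l' m' : ℕ) (hlmk : m ≤ k) (hlmk' : m' ≤ k)
    (hmm : IsMinmax E P v l m) (hmm' : IsMinmax E P v' l' m')
    (hnotall : ¬ (l = m ∧ m = l' ∧ l' = m')) :
    ((m ≤ l' → ∀ r, IsWheelerCOrder E f0 n0 f1 n1 r → r v v') ∧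
     (m' ≤ l → ∀ r, IsWheelerCOrder E f0 n0 f1 n1 r → r v' v) ∧
     (¬ (m ≤ l') → ¬ (m' ≤ l) →
        ¬ ∃ r, IsWheelerCOrder E f0 n0 f1 n1 r)) :=
  stmt_8_general E f0 n0 f1 n1 P k hW v v' hne a hlabv hlabv' l m l' m' hlmk hlmk' hmm hmm' hnotall

end
end

section
/- In a Wheeler graph with ordered nodes x_1 < ... < x_n and m edges, the LF mapping induced by the succinct representation is order-preserving: if e and e' are edges labeled a and a' with destinations v and v' respectively, and either a < a', or a = a' and e precedes e' in the order of source nodes, then v ≤ v'; restricted to the BOSS setting where each destination is reached by exactly one marked edge (W^-[i]=1), the mapping LF from marked edge positions to destination node ranks is a strictly increasing bijection onto {2,...,n} satisfying: W[i]<W[j] ⇒ LF(i)<LF(j), and W[i]=W[j] ∧ i<j ⇒ LF(i)<LF(j). -/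
/-!
The first claim is just the two Wheeler axioms. Within one source the labels of the outgoing
edges are strictly increasing, hence (first axiom) so are their destinations; so two edges with
the same label, or the same destination, that occur in BOSS order `i < j` have strictly ordered
sources. For two marked edges with equal labels the second axiom then gives `LF i ≤ LF j`, and
equality is excluded because the marked in-edge of a node has the smallest source among its
in-edges. That minimality also makes `LF` injective on marked positions, and the in-edge of `v`
at the smallest position is marked, which gives surjectivity onto the nodes of positive in-degree.
-/

section FirstInEdge

variable {ι N A : Type*} [LinearOrder ι] [LinearOrder N] [LinearOrder A]
  {src dst : ι → N} {W : ι → A}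

def IsFirstInEdge (src dst : ι → N) (i : ι) : Prop :=
  ∀ j, j ≠ i → dst j = dst i → src i < src j

theorem injOn_isFirstInEdge : Set.InjOn dst {i | IsFirstInEdge src dst i} := by
  intro i hi j hj hij
  by_contra hne
  exact (hi j (Ne.symm hne) hij.symm).asymm (hj i hne hij)

theorem src_lt_of_lt_of_label_eq (hsrc : Monotone src)
    (hlab : ∀ i j, src i = src j → i < j → W i < W j) {i j : ι} (hij : i < j)
    (hW : W i = W j) : src i < src j :=
  (hsrc hij.le).lt_of_ne fun hs => (hlab i j hs hij).ne hW

theorem src_lt_of_lt_of_dst_eq (hsrc : Monotone src)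
    (hlab : ∀ i j, src i = src j → i < j → W i < W j)
    (hA : ∀ i j, W i < W j → dst i < dst j) {i j : ι} (hij : i < j)
    (hd : dst i = dst j) : src i < src j :=
  (hsrc hij.le).lt_of_ne fun hs => (hA i j (hlab i j hs hij)).ne hd

theorem IsFirstInEdge.dst_lt_of_label_eq {i j : ι} (hj : IsFirstInEdge src dst j)
    (hsrc : Monotone src) (hlab : ∀ i j, src i = src j → i < j → W i < W j)
    (hB : ∀ i j, W i = W j → src i < src j → dst i ≤ dst j) (hW : W i = W j)
    (hij : i < j) : dst i < dst j := by
  have hs : src i < src j := src_lt_of_lt_of_label_eq hsrc hlab hij hW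
  exact (hB i j hW hs).lt_of_ne fun hd => (hj i hij.ne hd).asymm hs

theorem exists_isFirstInEdge_dst_eq [WellFoundedLT ι] (hsrc : Monotone src)
    (hlab : ∀ i j, src i = src j → i < j → W i < W j)
    (hA : ∀ i j, W i < W j → dst i < dst j) (i₀ : ι) :
    ∃ i, IsFirstInEdge src dst i ∧ dst i = dst i₀ := by
  obtain ⟨i, hi, hmin⟩ := wellFounded_lt.has_min {i | dst i = dst i₀} ⟨i₀, rfl⟩
  refine ⟨i, fun j hji hdj => ?_, hi⟩
  have hij : i < j := (not_lt.1 (hmin j (hdj.trans hi))).lt_of_ne hji.symm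
  exact src_lt_of_lt_of_dst_eq hsrc hlab hA hij hdj.symm

end FirstInEdge

/-- Order preservation of the LF mapping in a Wheeler graph / BOSS
representation.  Nodes are `Fin n` (already in Wheeler order), edges are the
positions `Fin m` with source `src i`, label `W i` and destination `dst i`
(`dst = LF`).  Positions are sorted by source and, within a source, by label
(BOSS layout).  The Wheeler conditions appear as hypotheses `hA`, `hB`; `mark`
marks, for each destination, the edge with the smallest source (`W⁻`), and
`v1` (the node `$^k`) is the unique node with in-degree 0.  Conclusions:
(1) generally, `a < a'`, or `a = a'` and the sources are ordered, forces the
destinations to satisfy `v ≤ v'`; (2) on marked positions, LF is strictly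
monotone in the sense `W i < W j → LF i < LF j` and
`W i = W j ∧ i < j → LF i < LF j`, and it is a bijection from the marked
positions onto the nodes different from `v1` (i.e. `{2,…,n}`). -/
theorem stmt_17 {A : Type} [LinearOrder A] (n m : ℕ)
    (src dst : Fin m → Fin n) (W : Fin m → A) (mark : Fin m → Bool)
    (v1 : Fin n)
    (hsorted : ∀ i j : Fin m, i < j → src i ≤ src j)
    (hsortlab : ∀ i j : Fin m, src i = src j → i < j → W i < W j)
    (hA : ∀ i j : Fin m, W i < W j → dst i < dst j)
    (hB : ∀ i j : Fin m, W i = W j → src i < src j → dst i ≤ dst j)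
    (hmark : ∀ i : Fin m, mark i = true ↔
      ∀ j : Fin m, j ≠ i → dst j = dst i → src i < src j)
    (hv1 : ∀ i : Fin m, dst i ≠ v1)
    (hsurj : ∀ v : Fin n, v ≠ v1 → ∃ i : Fin m, dst i = v) :
    (∀ i j : Fin m, (W i < W j ∨ (W i = W j ∧ src i < src j)) → dst i ≤ dst j) ∧
    (∀ i j : Fin m, mark i = true → mark j = true →
      (W i < W j → dst i < dst j) ∧ (W i = W j → i < j → dst i < dst j)) ∧
    (Set.BijOn dst {i : Fin m | mark i = true} {v : Fin n | v ≠ v1}) := by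
  have hsrc : Monotone src := monotone_iff_forall_lt.2 fun i j => hsorted i j
  have hmarked : ∀ i, mark i = true ↔ IsFirstInEdge src dst i := hmark
  refine ⟨fun i j h => h.elim (fun hW => (hA i j hW).le) fun ⟨hW, hs⟩ => hB i j hW hs,
    fun i j _ hj => ⟨hA i j, ((hmarked j).1 hj).dst_lt_of_label_eq hsrc hsortlab hB⟩,
    fun i _ => hv1 i, ?_, ?_⟩
  · exact fun i hi j hj => injOn_isFirstInEdge ((hmarked i).1 hi) ((hmarked j).1 hj)
  · intro v hv
    obtain ⟨i₀, rfl⟩ := hsurj v hv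
    obtain ⟨i, hi, hdi⟩ := exists_isFirstInEdge_dst_eq hsrc hsortlab hA i₀
    exact ⟨i, (hmarked i).2 hi, hdi⟩
end

section
/- In the union automaton quotient construction, if the W-consistent partition is a fixed point of refinement, then every non-singleton block that contains nodes from both input automata is reached (in the quotient) by edges originating from a single block, and consequently the subgraph of the quotient automaton induced by the blocks containing nodes from both input automata together with the source block forms a tree rooted at the source block. -/
/-!
Fixed-point property: every special block `i` has a single parent block `par i` from which all
its incoming edges come. The source `s` has its own singleton block `0`, which is therefore not
special, so every node of a special block has an incoming edge. Since edges not leaving `s` stay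
inside one input automaton, a parent `par i ≠ 0` receives predecessors of both kinds and is
special again. Finally, the parent of a block is strictly closer to `s` (measured by shortest
paths into the block), so iterating `par` ends at block `0`.
-/

def PathL {V A : Type} (E : V → V → A → Prop) : V → List A → V → Prop
  | u, [], v => u = v
  | u, a :: w, v => ∃ p, E u p a ∧ PathL E p w v

/-- A block is *special* if it contains nodes of both input automata
(ownership recorded by `g`). -/
def SpecialBlk {V : Type} (g : V → Bool) (P : ℕ → Set V) (i : ℕ) : Prop :=
  (∃ v ∈ P i, g v = false) ∧ (∃ v ∈ P i, g v = true)

theorem Function.exists_iterate_eq_of_measure_lt {α : Type*} (f : α → α) (S : α → Prop)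
    (μ : α → ℕ) (b : α) (h : ∀ x, S x → f x = b ∨ S (f x) ∧ μ (f x) < μ x) :
    ∀ {x}, S x → ∃ t, f^[t] x = b := by
  intro x
  induction hn : μ x using Nat.strong_induction_on generalizing x with
  | _ n ih =>
    intro hx
    rcases h x hx with hfx | ⟨hSfx, hlt⟩
    · exact ⟨1, hfx⟩
    · obtain ⟨t, ht⟩ := ih _ (hn ▸ hlt) rfl hSfx
      exact ⟨t + 1, ht⟩

namespace PathL

variable {V A : Type} {E : V → V → A → Prop}

theorem append_singleton_iff {u v : V} {w : List A} {a : A} :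
    PathL E u (w ++ [a]) v ↔ ∃ p, PathL E u w p ∧ E p v a := by
  induction w generalizing u with
  | nil => simp [PathL]
  | cons b w ih => simp only [List.cons_append, PathL, ih]; grind

theorem exists_last_edge {u v : V} {w : List A} (h : PathL E u w v) (hne : u ≠ v) :
    ∃ p a w', w = w' ++ [a] ∧ PathL E u w' p ∧ E p v a := by
  rcases w.eq_nil_or_concat' with rfl | ⟨w', a, rfl⟩
  · exact absurd h hne
  · obtain ⟨p, hp, he⟩ := append_singleton_iff.1 h
    exact ⟨p, a, w', rfl, hp, he⟩

end PathL

section QuotientBlocks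

variable {V A : Type} {E : V → V → A → Prop} {s : V} {g : V → Bool} {P : ℕ → Set V}

theorem SpecialBlk.exists_ne {i : ℕ} (h : SpecialBlk g P i) : ∃ v ∈ P i, ∃ w ∈ P i, v ≠ w := by
  obtain ⟨⟨v, hv, hgv⟩, ⟨w, hw, hgw⟩⟩ := h
  exact ⟨v, hv, w, hw, fun hvw => by simp_all⟩

theorem not_specialBlk_of_eq_singleton {i : ℕ} (h : P i = {s}) : ¬ SpecialBlk g P i := by
  rintro ⟨⟨v, hv, hgv⟩, ⟨w, hw, hgw⟩⟩
  rw [h, Set.mem_singleton_iff] at hv hw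
  subst hv hw
  simp_all

theorem SpecialBlk.of_forall_inEdge_mem {i l : ℕ}
    (hside : ∀ u v a, E u v a → u = s ∨ g u = g v)
    (hpred : ∀ v ∈ P i, ∃ u a, E u v a) (hl : ∀ v ∈ P i, ∀ u a, E u v a → u ∈ P l)
    (hs : s ∉ P l) (h : SpecialBlk g P i) : SpecialBlk g P l := by
  have lift : ∀ b, (∃ v ∈ P i, g v = b) → ∃ u ∈ P l, g u = b := by
    rintro b ⟨v, hv, rfl⟩
    obtain ⟨u, a, he⟩ := hpred v hv
    have hu := hl v hv u a he
    refine ⟨u, hu, (hside u v a he).resolve_left ?_⟩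
    rintro rfl
    exact hs hu
  exact ⟨lift _ h.1, lift _ h.2⟩

variable (E s P) in
noncomputable def blockDepth (i : ℕ) : ℕ :=
  sInf {n | ∃ v ∈ P i, ∃ w, PathL E s w v ∧ w.length = n}

theorem blockDepth_lt_of_forall_inEdge_mem {i l : ℕ} {v : V} {w : List A}
    (hv : v ∈ P i) (hw : PathL E s w v) (hs : s ∉ P i)
    (hl : ∀ v ∈ P i, ∀ u a, E u v a → u ∈ P l) :
    blockDepth E s P l < blockDepth E s P i := by
  obtain ⟨v, hv, w, hw, hlen⟩ :=
    Nat.sInf_mem (s := {n | ∃ v ∈ P i, ∃ w, PathL E s w v ∧ w.length = n}) ⟨_, v, hv, w, hw, rfl⟩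
  obtain ⟨p, a, w', rfl, hw', he⟩ := hw.exists_last_edge fun h => hs (h ▸ hv)
  calc blockDepth E s P l ≤ w'.length := Nat.sInf_le ⟨p, hl v hv p a he, w', hw', rfl⟩
    _ < (w' ++ [a]).length := by simp
    _ = blockDepth E s P i := hlen

end QuotientBlocks

theorem stmt_18_general {V A : Type}
    (E : V → V → A → Prop) (s : V) (g : V → Bool)
    (P : ℕ → Set V) (k : ℕ)
    (hP0 : P 0 = {s})
    (hdisj : ∀ i i' v, i ≤ k → i' ≤ k → v ∈ P i → v ∈ P i' → i = i')
    (hreach : ∀ v : V, ∃ w, PathL E s w v)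
    (hside : ∀ u v a, E u v a → u = s ∨ g u = g v)
    (hfix : ∀ i ≤ k, (∃ v ∈ P i, ∃ w ∈ P i, v ≠ w) →
      ∃ l ≤ k, ∀ v ∈ P i, ∀ u a, E u v a → u ∈ P l) :
    ∃ par : ℕ → ℕ, ∀ i ≤ k, SpecialBlk g P i →
      (par i ≤ k ∧
       (∀ j a, j ≤ k → (∃ v ∈ P j, ∃ v' ∈ P i, E v v' a) → j = par i) ∧
       (par i = 0 ∨ SpecialBlk g P (par i)) ∧
       (∃ t : ℕ, par^[t] i = 0)) := by
  choose! par hpar_le hpar using fun i hi (hsp : SpecialBlk g P i) => hfix i hi hsp.exists_ne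
  have hs_mem : ∀ i ≤ k, s ∈ P i → i = 0 := fun i hi hs =>
    hdisj i 0 s hi k.zero_le hs (by simp [hP0])
  have hs_notMem : ∀ i ≤ k, SpecialBlk g P i → s ∉ P i := fun i hi hsp hs =>
    not_specialBlk_of_eq_singleton hP0 (hs_mem i hi hs ▸ hsp)
  have hstep : ∀ i, i ≤ k ∧ SpecialBlk g P i → par i = 0 ∨
      (par i ≤ k ∧ SpecialBlk g P (par i)) ∧ blockDepth E s P (par i) < blockDepth E s P i := by
    rintro i ⟨hik, hsp⟩
    refine or_iff_not_imp_left.2 fun h0 => ?_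
    have hl := hpar i hik hsp
    have hpred : ∀ v ∈ P i, ∃ u a, E u v a := fun v hv => by
      obtain ⟨w, hw⟩ := hreach v
      obtain ⟨u, a, -, -, -, he⟩ := hw.exists_last_edge fun h => hs_notMem i hik hsp (h ▸ hv)
      exact ⟨u, a, he⟩
    have hle := hpar_le i hik hsp
    have hs : s ∉ P (par i) := fun hs => h0 (hs_mem _ hle hs)
    obtain ⟨v, hv, -⟩ := hsp.1
    obtain ⟨w, hw⟩ := hreach v
    exact ⟨⟨hle, hsp.of_forall_inEdge_mem hside hpred hl hs⟩,
      blockDepth_lt_of_forall_inEdge_mem hv hw (hs_notMem i hik hsp) hl⟩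
  refine ⟨par, fun i hik hsp => ⟨hpar_le i hik hsp, ?_,
    (hstep i ⟨hik, hsp⟩).imp_right fun h => h.1.2,
    Function.exists_iterate_eq_of_measure_lt par _ _ 0 hstep ⟨hik, hsp⟩⟩⟩
  rintro j a hjk ⟨v, hv, v', hv', he⟩
  exact hdisj j (par i) v hjk (hpar_le i hik hsp) hv (hpar i hik hsp v' hv' v a he)

/-- Structural claim used in the proof of Lemma 12.  If the W-consistent
partition `P 0, …, P k` of the union automaton is a fixed point of the
refinement (all incoming edges of a non-singleton block come from a single
block) and every non-singleton block is special, then in the quotient automaton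
every special block is reached by edges originating from a single block `par i`
which is the source block or special itself, and iterating `par` from any
special block reaches the source block:  the special blocks together with the
source block form a tree rooted at the source block. -/
theorem stmt_18 {V A : Type}
    (E : V → V → A → Prop) (s : V) (g : V → Bool)
    (P : ℕ → Set V) (k : ℕ)
    (hP0 : P 0 = {s})
    (hcover : ∀ v, ∃ i ≤ k, v ∈ P i)
    (hdisj : ∀ i i' v, i ≤ k → i' ≤ k → v ∈ P i → v ∈ P i' → i = i')
    (hsrc : ∀ u a, ¬ E u s a)
    (hreach : ∀ v : V, ∃ w, PathL E s w v)
    (hside : ∀ u v a, E u v a → u = s ∨ g u = g v)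
    (hfix : ∀ i ≤ k, (∃ v ∈ P i, ∃ w ∈ P i, v ≠ w) →
      ∃ l ≤ k, ∀ v ∈ P i, ∀ u a, E u v a → u ∈ P l)
    (hns : ∀ i ≤ k, (∃ v ∈ P i, ∃ w ∈ P i, v ≠ w) → SpecialBlk g P i) :
    ∃ par : ℕ → ℕ, ∀ i ≤ k, SpecialBlk g P i →
      (par i ≤ k ∧
       (∀ j a, j ≤ k → (∃ v ∈ P j, ∃ v' ∈ P i, E v v' a) → j = par i) ∧
       (par i = 0 ∨ SpecialBlk g P (par i)) ∧
       (∃ t : ℕ, par^[t] i = 0)) :=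
  stmt_18_general E s g P k hP0 hdisj hreach hside hfix
end

section
/- Let s_1,...,s_N be strings over an ordered alphabet and consider sorting them by a mixed LSD/MSD radix-like procedure: maintain for each h a stable arrangement satisfying 'position of s_i precedes position of s_j iff s_i[1..h] ≤ s_j[1..h] (lexicographically on length-h prefixes)'. If the arrangement for h−1 satisfies this invariant, and the arrangement for h is obtained by scanning the (h−1)-arrangement left to right and stably distributing each string into buckets keyed by its first symbol (where the remaining suffix of each string, shifted by one, equals the corresponding string of the previous level), then the arrangement for h also satisfies the invariant. -/
/-!
Each length-`h` prefix is its first symbol followed by the length-`(h-1)` prefix of its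
predecessor, and lexicographic order compares first symbols before the rest. Bucketing by first
symbol, with ties broken by the level-`(h-1)` positions of the predecessors, therefore orders the
strings exactly as their length-`h` prefixes.
-/

/-- The mixed LSD/MSD radix sorting invariant (Holt–McMillan style), abstract
version.  `s 0, …, s (N-1)` are strings over an ordered alphabet; an
arrangement is given by a ranking `π`.  `Inv h π` states that the arrangement
sorts the strings by their length-`h` prefixes: strictly smaller prefixes come
strictly earlier, and earlier positions have lexicographically ≤ prefixes. -/
def RadixInv {A : Type} [LinearOrder A] {N : ℕ}
    (s : Fin N → List A) (h : ℕ) (π : Fin N → Fin N) : Prop :=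
  ∀ i j : Fin N,
    (List.Lex (· < ·) ((s i).take h) ((s j).take h) → π i < π j) ∧
    (π i < π j → (List.Lex (· < ·) ((s i).take h) ((s j).take h) ∨
      (s i).take h = (s j).take h))

theorem List.exists_take_one_eq_and_take_eq_cons {A : Type*} {l l' : List A} {h : ℕ}
    (hh : 1 ≤ h) (hlen : h ≤ l.length) (hsplit : l.take h = l.take 1 ++ l'.take (h - 1)) :
    ∃ a, l.take 1 = [a] ∧ l.take h = a :: l'.take (h - 1) := by
  obtain ⟨a, t, rfl⟩ := List.exists_cons_of_length_pos (by omega : 0 < l.length)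
  exact ⟨a, rfl, by simpa using hsplit⟩

/-- If the arrangement `π` for level `h−1` satisfies the invariant, and the
arrangement `π'` for level `h` is obtained by scanning the `(h−1)`-arrangement
and stably distributing each string into buckets keyed by its first symbol
(the remaining suffix, shifted by one, being the string `pred i` of the
previous level: `(s i).take h = (s i).take 1 ++ (s (pred i)).take (h−1)`),
then `π'` satisfies the invariant for `h`. -/
theorem stmt_19 {A : Type} [LinearOrder A] {N : ℕ}
    (s : Fin N → List A) (h : ℕ) (hh : 1 ≤ h)
    (hlen : ∀ i, h ≤ (s i).length)
    (pred : Fin N → Fin N)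
    (hpred : ∀ i, (s i).take h = (s i).take 1 ++ (s (pred i)).take (h - 1))
    (π π' : Fin N → Fin N)
    (hInv : RadixInv s (h - 1) π)
    (hdist : ∀ i j c c', (s i).take 1 = [c] → (s j).take 1 = [c'] →
      (π' i < π' j ↔ (c < c' ∨ (c = c' ∧ π (pred i) < π (pred j))))) :
    RadixInv s h π' := by
  intro i j
  obtain ⟨a, hai, hi⟩ := List.exists_take_one_eq_and_take_eq_cons hh (hlen i) (hpred i)
  obtain ⟨b, hbj, hj⟩ := List.exists_take_one_eq_and_take_eq_cons hh (hlen j) (hpred j)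
  obtain ⟨hlex_lt, hlt_le⟩ := hInv (pred i) (pred j)
  rw [hi, hj, List.cons_lex_cons_iff, hdist i j a b hai hbj]
  constructor
  · rintro (hab | ⟨rfl, hlex⟩)
    · exact .inl hab
    · exact .inr ⟨rfl, hlex_lt hlex⟩
  · rintro (hab | ⟨rfl, hlt⟩)
    · exact .inl (.inl hab)
    · rcases hlt_le hlt with hlex | heq
      · exact .inl (.inr ⟨rfl, hlex⟩)
      · exact .inr (by rw [heq])
end
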